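/- arXiv:quant-ph/0005007 — 3 statements merged into one kernel-verified Lean document; each statement's English description precedes it below -/
import Mathlib

section
/- Let |w⟩ and |w̃⟩ be unit vectors in ℂ^N with real nonnegative inner product ⟨w|w̃⟩ = cos θ. Define the reflections U_w = 1 - 2|w⟩⟨w| and U_{w̃} = 1 - 2|w̃⟩⟨w̃|. Then the operator norm satisfies ‖U_w - U_{w̃}‖ = 2|sin θ|. -/
open scoped InnerProductSpace

/-- Reflection about the hyperplane orthogonal to `v`: `1 - 2|v⟩⟨v|`. -/
noncomputable def reflOp {N : ℕ} (v : EuclideanSpace ℂ (Fin N)) :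
    EuclideanSpace ℂ (Fin N) →L[ℂ] EuclideanSpace ℂ (Fin N) :=
  ContinuousLinearMap.id ℂ (EuclideanSpace ℂ (Fin N)) -
    (2 : ℂ) • ((innerSL ℂ v).smulRight v)

/-!
Write `P v = |v⟩⟨v|`, so that `U_w - U_w̃ = 2 (P w̃ - P w)`. For unit vectors `x, y` the
self-adjoint operator `T = P y - P x` satisfies `T³ = (1 - |⟨x|y⟩|²) T`, and the C*-identity
`‖T‖⁴ = ‖T⁴‖` then forces `‖T‖ = 0` or `‖T‖² = 1 - |⟨x|y⟩|²`. Since `‖T x‖² = 1 - |⟨x|y⟩|²`,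
the second alternative holds in every case; with `⟨w|w̃⟩ = cos θ` this is `‖T‖ = |sin θ|`.
-/

open InnerProductSpace ContinuousLinearMap

theorem IsSelfAdjoint.norm_eq_zero_or_sq_norm_eq_of_pow_three_eq_smul {𝕜 A : Type*}
    [NormedField 𝕜] [NormedRing A] [NormedAlgebra 𝕜 A] [StarRing A] [CStarRing A] {a : A}
    (ha : IsSelfAdjoint a) {c : 𝕜} (h : a ^ 3 = c • a) : ‖a‖ = 0 ∨ ‖a‖ ^ 2 = ‖c‖ := by
  have hfour : a ^ 4 = c • a ^ 2 := by rw [pow_succ, h, smul_mul_assoc, ← sq]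
  have hsq : ‖a ^ 2‖ = ‖a‖ ^ 2 := ha.norm_pow_two_pow 1
  have hfourth : ‖a ^ 4‖ = ‖a‖ ^ 4 := ha.norm_pow_two_pow 2
  rw [hfour, norm_smul, hsq] at hfourth
  have : ‖a‖ ^ 2 * (‖a‖ ^ 2 - ‖c‖) = 0 := by linear_combination -hfourth
  simpa [sub_eq_zero] using this

section RankOne

variable {𝕜 E : Type*} [RCLike 𝕜] [NormedAddCommGroup E] [InnerProductSpace 𝕜 E]
  {x y : E}

theorem rankOne_self_sub_rankOne_self_pow_three (hx : ‖x‖ = 1) (hy : ‖y‖ = 1) :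
    (rankOne 𝕜 y y - rankOne 𝕜 x x) ^ 3
      = ((1 - ‖⟪x, y⟫_𝕜‖ ^ 2 : ℝ) : 𝕜) • (rankOne 𝕜 y y - rankOne 𝕜 x x) := by
  have hconj : (‖⟪x, y⟫_𝕜‖ : 𝕜) ^ 2 = ⟪y, x⟫_𝕜 * ⟪x, y⟫_𝕜 := by
    rw [← inner_conj_symm y x, RCLike.conj_mul]
  rw [RCLike.ofReal_sub, RCLike.ofReal_one, RCLike.ofReal_pow, hconj]
  simp only [pow_succ, pow_zero, one_mul, sub_mul, mul_sub, mul_def, rankOne_comp_rankOne,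
    smul_comp, inner_self_eq_one_of_norm_eq_one hx, inner_self_eq_one_of_norm_eq_one hy, one_smul]
  match_scalars <;> ring

theorem sq_norm_rankOne_self_sub_rankOne_self_apply (hx : ‖x‖ = 1) (hy : ‖y‖ = 1) :
    ‖(rankOne 𝕜 y y - rankOne 𝕜 x x) x‖ ^ 2 = 1 - ‖⟪x, y⟫_𝕜‖ ^ 2 := by
  rw [sub_apply, rankOne_apply, rankOne_apply, inner_self_eq_one_of_norm_eq_one hx, one_smul,
    norm_sub_sq (𝕜 := 𝕜), inner_smul_left, RCLike.conj_mul, norm_smul, hx, hy, norm_inner_symm]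
  norm_cast
  ring

theorem sq_norm_rankOne_self_sub_rankOne_self [CompleteSpace E] (hx : ‖x‖ = 1) (hy : ‖y‖ = 1) :
    ‖rankOne 𝕜 y y - rankOne 𝕜 x x‖ ^ 2 = 1 - ‖⟪x, y⟫_𝕜‖ ^ 2 := by
  set T := rankOne 𝕜 y y - rankOne 𝕜 x x
  have hT : IsSelfAdjoint T := (isStarProjection_rankOne_self hy).isSelfAdjoint.sub
    (isStarProjection_rankOne_self hx).isSelfAdjoint
  have hnonneg : 0 ≤ 1 - ‖⟪x, y⟫_𝕜‖ ^ 2 := by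
    have := norm_inner_le_norm (𝕜 := 𝕜) x y
    rw [hx, hy, one_mul] at this
    nlinarith [norm_nonneg ⟪x, y⟫_𝕜]
  have hlower : 1 - ‖⟪x, y⟫_𝕜‖ ^ 2 ≤ ‖T‖ ^ 2 := by
    rw [← sq_norm_rankOne_self_sub_rankOne_self_apply hx hy]
    gcongr
    simpa only [hx, mul_one] using T.le_opNorm x
  rcases hT.norm_eq_zero_or_sq_norm_eq_of_pow_three_eq_smul
    (rankOne_self_sub_rankOne_self_pow_three (𝕜 := 𝕜) hx hy) with h | h
  · rw [h] at hlower ⊢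
    linarith
  · rw [h, RCLike.norm_ofReal, abs_of_nonneg hnonneg]

end RankOne

theorem stmt1_general (N : ℕ) (w wt : EuclideanSpace ℂ (Fin N))
    (hw : ‖w‖ = 1) (hwt : ‖wt‖ = 1) (θ : ℝ)
    (hinner : ⟪w, wt⟫_ℂ = (Real.cos θ : ℝ)) :
    ‖reflOp w - reflOp wt‖ = 2 * |Real.sin θ| := by
  have hdiff : reflOp w - reflOp wt = (2 : ℂ) • (rankOne ℂ wt wt - rankOne ℂ w w) := by
    simp only [reflOp, ← rankOne_def]
    module
  have hsq : ‖rankOne ℂ wt wt - rankOne ℂ w w‖ ^ 2 = Real.sin θ ^ 2 := by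
    rw [sq_norm_rankOne_self_sub_rankOne_self hw hwt, hinner, Complex.norm_real,
      Real.norm_eq_abs, sq_abs, ← Real.sin_sq_add_cos_sq θ]
    ring
  rw [hdiff, norm_smul, ← Real.sqrt_sq_eq_abs, ← hsq, Real.sqrt_sq (norm_nonneg _)]
  norm_num

/-- for unit vectors `w, w̃` in ℂ^N with real nonnegative inner product
`⟨w|w̃⟩ = cos θ` (θ ∈ [0, π/2]), the operator norm of the difference of the two
reflections is `2|sin θ|`. -/
theorem stmt1 (N : ℕ) (w wt : EuclideanSpace ℂ (Fin N))
    (hw : ‖w‖ = 1) (hwt : ‖wt‖ = 1) (θ : ℝ)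
    (hθ0 : 0 ≤ θ) (hθ1 : θ ≤ Real.pi / 2)
    (hinner : ⟪w, wt⟫_ℂ = (Real.cos θ : ℝ)) :
    ‖reflOp w - reflOp wt‖ = 2 * |Real.sin θ| :=
  stmt1_general N w wt hw hwt θ hinner
end

section
/- For unit vectors v_α, v_β in a complex Hilbert space and any complete family of orthogonal projections {M_j}, the Wootters statistical distance between the induced Born probability distributions p_j = ⟨v_α|M_j|v_α⟩ and q_j = ⟨v_β|M_j|v_β⟩ satisfies d(p,q) = arccos(∑_j √(p_j q_j)) ≤ arccos|⟨v_α|v_β⟩|. -/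
open scoped InnerProductSpace

/-- for unit vectors `v_α, v_β` in a complex Hilbert space and a complete
family of mutually orthogonal projections `{M_j}`, the Wootters statistical distance
between the Born distributions `p_j = ⟨v_α|M_j|v_α⟩` and `q_j = ⟨v_β|M_j|v_β⟩`
satisfies `arccos (∑_j √(p_j q_j)) ≤ arccos |⟨v_α|v_β⟩|`. -/
theorem stmt16 {H : Type*} [NormedAddCommGroup H] [InnerProductSpace ℂ H]
    [CompleteSpace H] {J : Type*} [Fintype J] [DecidableEq J]
    (M : J → (H →L[ℂ] H))
    (hMsa : ∀ j, ContinuousLinearMap.adjoint (M j) = M j)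
    (hMorth : ∀ j k, (M j) ∘L (M k) = if j = k then M j else 0)
    (hMsum : ∑ j, M j = ContinuousLinearMap.id ℂ H)
    (vα vβ : H) (hvα : ‖vα‖ = 1) (hvβ : ‖vβ‖ = 1)
    (p q : J → ℝ)
    (hp : ∀ j, p j = (⟪vα, M j vα⟫_ℂ).re) (hq : ∀ j, q j = (⟪vβ, M j vβ⟫_ℂ).re) :
    Real.arccos (∑ j, Real.sqrt (p j * q j)) ≤ Real.arccos ‖⟪vα, vβ⟫_ℂ‖ := by
  have key : ∀ (v : H) j, (⟪v, M j v⟫_ℂ).re = ‖M j v‖ ^ 2 := by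
    intro v j
    have hthis := hMorth j j
    simp only [if_pos] at hthis
    have h1 : M j (M j v) = M j v := by
      rw [← ContinuousLinearMap.comp_apply, hthis]
    have h2 : ⟪v, M j v⟫_ℂ = ⟪M j v, M j v⟫_ℂ := by
      conv_lhs => rw [← h1]
      rw [← ContinuousLinearMap.adjoint_inner_left, hMsa]
    rw [h2]
    exact inner_self_eq_norm_sq (𝕜 := ℂ) _
  have hps : ∀ j, p j = ‖M j vα‖ ^ 2 := fun j => by rw [hp j, key]
  have hqs : ∀ j, q j = ‖M j vβ‖ ^ 2 := fun j => by rw [hq j, key]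
  have hmain : ‖⟪vα, vβ⟫_ℂ‖ ≤ ∑ j, Real.sqrt (p j * q j) := by
    have hsplit : ⟪vα, vβ⟫_ℂ = ∑ j, ⟪M j vα, M j vβ⟫_ℂ := by
      have : vβ = ∑ j, M j vβ := by
        have h := congrArg (fun T : H →L[ℂ] H => T vβ) hMsum
        simp only [ContinuousLinearMap.sum_apply, ContinuousLinearMap.id_apply] at h
        exact h.symm
      conv_lhs => rw [this]
      rw [inner_sum]
      refine Finset.sum_congr rfl fun j _ => ?_
      have hthis := hMorth j j
      simp only [if_pos] at hthis
      have h1 : M j (M j vβ) = M j vβ := by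
        rw [← ContinuousLinearMap.comp_apply, hthis]
      conv_lhs => rw [← h1]
      rw [← ContinuousLinearMap.adjoint_inner_left, hMsa]
    calc ‖⟪vα, vβ⟫_ℂ‖ = ‖∑ j, ⟪M j vα, M j vβ⟫_ℂ‖ := by rw [hsplit]
      _ ≤ ∑ j, ‖⟪M j vα, M j vβ⟫_ℂ‖ := norm_sum_le _ _
      _ ≤ ∑ j, ‖M j vα‖ * ‖M j vβ‖ :=
          Finset.sum_le_sum fun j _ => norm_inner_le_norm _ _
      _ = ∑ j, Real.sqrt (p j * q j) := by
          refine Finset.sum_congr rfl fun j _ => ?_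
          rw [hps j, hqs j, Real.sqrt_mul (sq_nonneg _), Real.sqrt_sq (norm_nonneg _),
            Real.sqrt_sq (norm_nonneg _)]
  simp only [Real.arccos]
  have := Real.monotone_arcsin hmain
  linarith
end

section
/- Let N = 2^n and suppose the Grover iterate is implemented with the faulty reflection U_{w̃} (with |w̃⟩ orthogonal to the marked basis vector |0⟩) in place of U_w. Then after any even number 2m of applications of U_{w̃}U_0 to the initial state |w⟩, the probability of measuring outcome 0 equals |⟨0|w⟩|² = 1/N, i.e., it is never amplified above 1/N. -/
/-!
Writing `P_v = |v⟩⟨v|`, the reflection is `1 - 2 P_v`, an involution whenever `P_v` is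
idempotent, i.e. `‖v‖ = 1`. Since `|w̃⟩ ⊥ |0⟩`, the projections `P_{w̃}` and `P_0` annihilate
each other, so the two reflections commute and `(U_{w̃} U_0)² = U_{w̃}² U_0² = 1`. Hence every
even number of faulty Grover iterations leaves `|w⟩` unchanged, and `|⟨0|w⟩|² = 1/N`.
-/

open scoped InnerProductSpace

open InnerProductSpace

theorem IsIdempotentElem.one_sub_two_mul_sq {R : Type*} [Ring R] {p : R}
    (hp : IsIdempotentElem p) : (1 - 2 * p) ^ 2 = 1 := by
  calc (1 - 2 * p) ^ 2 = 1 - 4 * p + 4 * (p * p) := by noncomm_ring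
    _ = 1 := by rw [hp.eq]; noncomm_ring

theorem Commute.one_sub_two_mul {R : Type*} [Ring R] {p q : R} (h : Commute p q) :
    Commute (1 - 2 * p) (1 - 2 * q) := by
  have h2 : Commute (2 * p) (2 * q) :=
    (Commute.ofNat_left 2 _).mul_left ((Commute.ofNat_right p 2).mul_right h)
  exact (Commute.one_left _).sub_left ((Commute.one_right _).sub_right h2)

theorem InnerProductSpace.commute_rankOne_self_of_inner_eq_zero {𝕜 E : Type*} [RCLike 𝕜]
    [NormedAddCommGroup E] [InnerProductSpace 𝕜 E] {u v : E} (h : ⟪u, v⟫_𝕜 = 0) :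
    Commute (rankOne 𝕜 u u) (rankOne 𝕜 v v) := by
  simp [Commute, SemiconjBy, ContinuousLinearMap.mul_def, rankOne_comp_rankOne, h,
    inner_eq_zero_symm.mp h]

section Reflection

variable {N : ℕ} {u v : EuclideanSpace ℂ (Fin N)}

theorem reflOp_eq_one_sub_two_mul_rankOne (v : EuclideanSpace ℂ (Fin N)) :
    reflOp v = 1 - 2 * rankOne ℂ v v := by
  ext x
  simp [reflOp, two_smul, two_mul]

theorem reflOp_sq (hv : ‖v‖ = 1) : reflOp v ^ 2 = 1 := by
  rw [reflOp_eq_one_sub_two_mul_rankOne]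
  exact (isIdempotentElem_rankOne_self hv).one_sub_two_mul_sq

theorem commute_reflOp (huv : ⟪u, v⟫_ℂ = 0) : Commute (reflOp u) (reflOp v) := by
  rw [reflOp_eq_one_sub_two_mul_rankOne, reflOp_eq_one_sub_two_mul_rankOne]
  exact (commute_rankOne_self_of_inner_eq_zero huv).one_sub_two_mul

theorem reflOp_comp_reflOp_pow_two_mul (hu : ‖u‖ = 1) (hv : ‖v‖ = 1) (huv : ⟪u, v⟫_ℂ = 0)
    (m : ℕ) : ((reflOp u).comp (reflOp v)) ^ (2 * m) = 1 := by
  rw [pow_mul, ← ContinuousLinearMap.mul_def, (commute_reflOp huv).mul_pow, reflOp_sq hu,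
    reflOp_sq hv, one_mul, one_pow]

end Reflection

theorem norm_toLp_uniform_off_zero {N : ℕ} (hN : 2 ≤ N) :
    ‖(WithLp.toLp 2 (fun j : Fin N => if j.val = 0 then 0
      else ((1 / Real.sqrt (N - 1) : ℝ) : ℂ)) : EuclideanSpace ℂ (Fin N))‖ = 1 := by
  obtain ⟨k, rfl⟩ : ∃ k, N = k + 1 := ⟨N - 1, by omega⟩
  have hk : (0 : ℝ) < k := by exact_mod_cast (by omega : 0 < k)
  rw [EuclideanSpace.norm_eq, Fin.sum_univ_succ]
  simp [Fin.val_succ, hk.le, (Real.sqrt_pos.2 hk).ne']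

/-- if the Grover iterate is implemented with the faulty reflection
`U_{w̃}` (where `|w̃⟩` is the uniform superposition over indices `1, …, N-1`,
orthogonal to the marked vector `|0⟩`) in place of `U_w`, then after any even number
`2m` of applications of `U_{w̃}U₀` to the uniform superposition `|w⟩`, the Born
probability of measuring outcome `0` is still `|⟨0|w⟩|² = 1/N`: it is never
amplified. -/
theorem stmt18 (N : ℕ) (hN : 2 ≤ N)
    (w wt e0 : EuclideanSpace ℂ (Fin N))
    (hw : w = WithLp.toLp 2 (fun _ => ((1 / Real.sqrt N : ℝ) : ℂ)))
    (hwt : wt = WithLp.toLp 2 (fun j => if j.val = 0 then 0 else ((1 / Real.sqrt (N - 1) : ℝ) : ℂ)))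
    (he0 : e0 = EuclideanSpace.single ⟨0, by omega⟩ 1) :
    ∀ m : ℕ, ‖⟪e0, (((reflOp wt).comp (reflOp e0)) ^ (2 * m)) w⟫_ℂ‖ ^ 2 =
      1 / (N : ℝ) := by
  intro m
  have he0_norm : ‖e0‖ = 1 := by simp [he0]
  have hwt_norm : ‖wt‖ = 1 := hwt ▸ norm_toLp_uniform_off_zero hN
  have horth : ⟪wt, e0⟫_ℂ = 0 := by simp [hwt, he0, EuclideanSpace.inner_single_right]
  rw [reflOp_comp_reflOp_pow_two_mul hwt_norm he0_norm horth, one_apply_eq_self, hw, he0,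
    EuclideanSpace.inner_single_left]
  simp [Real.sq_sqrt (Nat.cast_nonneg N)]
end
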